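/- arXiv:1609.07358 — 2 statements merged into one kernel-verified Lean document; each statement's English description precedes it below -/
import Mathlib

section
/- The FISTA iterates satisfy, for every k ≥ 1, F(x_k) − F(x_*) ≤ θ_{k−1}²·(1/μ)·(F(x_0) − F(x_*)). -/
/-!
Compare the step from `y_k` with the point `u = (1 - θ_k) x_k + θ_k x_*`. The descent inequality,
the tangent-plane inequality for `f` at `y_k`, the three-point property of the proximal step and
convexity of `F` along the segment `[x_k, x_*]` give, since `u - y_k = θ_k (x_* - z_k)` and
`u - x_{k+1} = θ_k (x_* - z_{k+1})`,
  `F(x_{k+1}) - F_* ≤ (1 - θ_k)(F(x_k) - F_*) + θ_k²/2 (‖x_* - z_k‖_v² - ‖x_* - z_{k+1}‖_v²)`.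
The momentum rule is equivalent to `θ_{k+1}² = θ_k² (1 - θ_{k+1})`, so this telescopes to
`F(x_{k+1}) - F_* ≤ θ_k²/2 ‖x_* - x_0‖_v²`, and quadratic growth bounds the last norm by
`2 (F(x_0) - F_*) / μ`.
-/

open scoped RealInnerProductSpace Topology
open Set Filter

section QuadraticForm

variable {E : Type*} [AddCommGroup E] [Module ℝ E] (Q : QuadraticForm ℝ E)

theorem QuadraticMap.map_one_sub_smul_add_smul (a b : E) (t : ℝ) :
    Q ((1 - t) • a + t • b) = (1 - t) * Q a + t * Q b - t * (1 - t) * Q (a - b) := by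
  have hsub : Q (a - b) = Q a + Q b - QuadraticMap.polar Q a b := by
    rw [sub_eq_add_neg, QuadraticMap.map_add (⇑Q), QuadraticMap.map_neg,
      QuadraticMap.polar_neg_right]
    ring
  rw [hsub, QuadraticMap.map_add (⇑Q), QuadraticMap.map_smul, QuadraticMap.map_smul,
    QuadraticMap.polar_smul_left, QuadraticMap.polar_smul_right]
  simp only [smul_eq_mul]
  ring

/-- Three-point property of a proximal step. Minimality against `(1 - t) • p + t • u` gives the
claim with `Q (u - p)` weakened to `(1 - t) * Q (u - p)`; then let `t → 0`. -/
theorem ConvexOn.prox_three_point {φ : E → ℝ} (hφ : ConvexOn ℝ univ φ) {p y : E}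
    (hp : ∀ u, φ p + Q (p - y) / 2 ≤ φ u + Q (u - y) / 2) (u : E) :
    φ p + Q (p - y) / 2 + Q (u - p) / 2 ≤ φ u + Q (u - y) / 2 := by
  have hscaled : ∀ t ∈ Ioo (0 : ℝ) 1,
      (1 - t) * (Q (u - p) / 2) ≤ φ u + Q (u - y) / 2 - (φ p + Q (p - y) / 2) := by
    rintro t ⟨ht0, ht1⟩
    have hmin := hp ((1 - t) • p + t • u)
    have hconv : φ ((1 - t) • p + t • u) ≤ (1 - t) * φ p + t * φ u :=
      hφ.2 (mem_univ p) (mem_univ u) (by linarith) ht0.le (by ring)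
    have hQ : Q ((1 - t) • p + t • u - y)
        = (1 - t) * Q (p - y) + t * Q (u - y) - t * (1 - t) * Q (u - p) := by
      rw [show (1 - t) • p + t • u - y = (1 - t) • (p - y) + t • (u - y) by module,
        Q.map_one_sub_smul_add_smul, sub_sub_sub_cancel_right, Q.map_sub p u]
    rw [hQ] at hmin
    nlinarith
  have hlim : Tendsto (fun t : ℝ => (1 - t) * (Q (u - p) / 2)) (𝓝[>] 0)
      (𝓝 (Q (u - p) / 2)) := by
    have hcont : Continuous (fun t : ℝ => (1 - t) * (Q (u - p) / 2)) := by fun_prop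
    simpa using (hcont.tendsto 0).mono_left nhdsWithin_le_nhds
  have := le_of_tendsto hlim (by filter_upwards [Ioo_mem_nhdsGT one_pos] using hscaled)
  linarith

end QuadraticForm

section InnerProductSpace

variable {E : Type*} [NormedAddCommGroup E] [InnerProductSpace ℝ E] [CompleteSpace E]

theorem ConvexOn.add_inner_sub_le_of_hasGradientAt {f : E → ℝ} {f' x : E}
    (hf : ConvexOn ℝ univ f) (hx : HasGradientAt f f' x) (y : E) :
    f x + ⟪f', y - x⟫ ≤ f y := by
  set l : ℝ →ᵃ[ℝ] E := AffineMap.lineMap x y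
  have hderiv : HasDerivAt (f ∘ l) ⟪f', y - x⟫ 0 := by
    have hx' : HasFDerivAt f (InnerProductSpace.toDual ℝ E f') (l 0) := by
      simpa [l] using hx.hasFDerivAt
    simpa using hx'.comp_hasDerivAt (0 : ℝ) AffineMap.hasDerivAt_lineMap
  have := (hf.comp_affineMap l).le_slope_of_hasDerivAt (mem_univ 0) (mem_univ 1) zero_lt_one
    hderiv
  simp [slope_def_field, l] at this
  linarith

theorem fista_suboptimality_step (Q : QuadraticForm ℝ E) {f ψ : E → ℝ}
    {g x x' y z z' xstar : E} {θ : ℝ}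
    (hf : ConvexOn ℝ univ f) (hψ : ConvexOn ℝ univ ψ) (hg : HasGradientAt f g y)
    (hdesc : f x' ≤ f y + ⟪g, x' - y⟫ + Q (x' - y) / 2)
    (hprox : ∀ u, ⟪g, x' - y⟫ + Q (x' - y) / 2 + ψ x' ≤ ⟪g, u - y⟫ + Q (u - y) / 2 + ψ u)
    (hθ0 : 0 < θ) (hθ1 : θ ≤ 1) (hy : y = (1 - θ) • x + θ • z)
    (hz' : z' = z + θ⁻¹ • (x' - y)) :
    (f + ψ) x' - (f + ψ) xstar ≤
      (1 - θ) * ((f + ψ) x - (f + ψ) xstar) + θ ^ 2 / 2 * (Q (xstar - z) - Q (xstar - z')) := by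
  set u := (1 - θ) • x + θ • xstar
  have htangent := hf.add_inner_sub_le_of_hasGradientAt hg u
  have hφ : ConvexOn ℝ univ (fun w => ⟪g, w - y⟫ + ψ w) := by
    have hlin := (innerₛₗ ℝ g).convexOn convex_univ
    refine ((hlin.add hψ).add_const (-⟪g, y⟫)).congr fun w _ => ?_
    simp only [Pi.add_apply, innerₛₗ_apply_apply, inner_sub_right]
    ring
  have hthree := hφ.prox_three_point Q (p := x') (y := y) (fun w => by linarith [hprox w]) u
  have hFu : (f + ψ) u ≤ (1 - θ) * (f + ψ) x + θ * (f + ψ) xstar :=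
    (hf.add hψ).2 (mem_univ x) (mem_univ xstar) (by linarith) hθ0.le (by ring)
  have huy : u - y = θ • (xstar - z) := by rw [hy]; module
  have hux : u - x' = θ • (xstar - z') := by
    rw [hz', smul_sub, smul_add, smul_smul, mul_inv_cancel₀ hθ0.ne', one_smul, hy]; module
  have hQuy : Q (u - y) = θ ^ 2 * Q (xstar - z) := by rw [huy, Q.map_smul, smul_eq_mul, sq]
  have hQux : Q (u - x') = θ ^ 2 * Q (xstar - z') := by rw [hux, Q.map_smul, smul_eq_mul, sq]
  rw [hQuy, hQux] at hthree
  simp only [Pi.add_apply] at hFu ⊢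
  linarith

end InnerProductSpace

/-- The positive root `t` of `t ^ 2 = θ ^ 2 * (1 - t)`. -/
noncomputable def fistaMomentum (θ : ℝ) : ℝ := (Real.sqrt (θ ^ 4 + 4 * θ ^ 2) - θ ^ 2) / 2

theorem fistaMomentum_sq (θ : ℝ) : fistaMomentum θ ^ 2 = θ ^ 2 * (1 - fistaMomentum θ) := by
  have h := Real.sq_sqrt (by positivity : (0 : ℝ) ≤ θ ^ 4 + 4 * θ ^ 2)
  unfold fistaMomentum
  linear_combination h / 4

theorem fistaMomentum_pos {θ : ℝ} (hθ : 0 < θ) : 0 < fistaMomentum θ := by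
  have h : θ ^ 2 < Real.sqrt (θ ^ 4 + 4 * θ ^ 2) :=
    Real.lt_sqrt_of_sq_lt (by nlinarith [pow_pos hθ 2])
  unfold fistaMomentum
  linarith

theorem fistaMomentum_lt_one {θ : ℝ} (hθ : 0 < θ) : fistaMomentum θ < 1 := by
  have h := fistaMomentum_sq θ
  nlinarith [fistaMomentum_pos hθ, pow_pos hθ 2, pow_pos (fistaMomentum_pos hθ) 2]

/-- `θ (k + 1) ^ 2 = θ k ^ 2 * (1 - θ (k + 1))` makes `a (k + 1) / θ k ^ 2 + d (k + 1) / 2`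
nonincreasing. -/
theorem fista_potential_le {a d θ : ℕ → ℝ} (hθ0 : θ 0 = 1) (hθ1 : ∀ k, θ (k + 1) ≤ 1)
    (hθsq : ∀ k, θ (k + 1) ^ 2 = θ k ^ 2 * (1 - θ (k + 1)))
    (hstep : ∀ k, a (k + 1) ≤ (1 - θ k) * a k + θ k ^ 2 / 2 * (d k - d (k + 1))) (k : ℕ) :
    a (k + 1) + θ k ^ 2 / 2 * d (k + 1) ≤ θ k ^ 2 / 2 * d 0 := by
  induction k with
  | zero =>
    have h := hstep 0
    rw [hθ0] at h ⊢
    linarith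
  | succ k ih =>
    have hmono := mul_le_mul_of_nonneg_left ih (sub_nonneg.2 (hθ1 k))
    calc a (k + 2) + θ (k + 1) ^ 2 / 2 * d (k + 2)
        ≤ (1 - θ (k + 1)) * (a (k + 1) + θ k ^ 2 / 2 * d (k + 1)) := by
          have h := hstep (k + 1)
          rw [hθsq k] at h ⊢
          linarith
      _ ≤ θ (k + 1) ^ 2 / 2 * d 0 := by
          rw [hθsq k]
          linarith

noncomputable def EuclideanSpace.weightedSumSquares {ι : Type*} [Fintype ι] (v : ι → ℝ) :
    QuadraticForm ℝ (EuclideanSpace ℝ ι) :=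
  (QuadraticMap.weightedSumSquares ℝ v).comp (WithLp.linearEquiv 2 ℝ (ι → ℝ)).toLinearMap

theorem EuclideanSpace.weightedSumSquares_apply {ι : Type*} [Fintype ι] (v : ι → ℝ)
    (w : EuclideanSpace ℝ ι) : weightedSumSquares v w = ∑ i, v i * (w i) ^ 2 := by
  simp [weightedSumSquares, QuadraticMap.weightedSumSquares_apply, sq]

theorem EuclideanSpace.weightedSumSquares_nonneg {ι : Type*} [Fintype ι] {v : ι → ℝ}
    (hv : ∀ i, 0 ≤ v i) (w : EuclideanSpace ℝ ι) : 0 ≤ weightedSumSquares v w := by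
  rw [weightedSumSquares_apply]
  exact Finset.sum_nonneg fun i _ => mul_nonneg (hv i) (sq_nonneg _)

theorem stmt_6_general {n : ℕ}
    (v : Fin n → ℝ) (hv : ∀ i, 0 < v i)
    (f ψ F : EuclideanSpace ℝ (Fin n) → ℝ)
    (g : EuclideanSpace ℝ (Fin n) → EuclideanSpace ℝ (Fin n))
    (hfconv : ConvexOn ℝ Set.univ f)
    (hgrad : ∀ x, HasGradientAt f (g x) x)
    (hdesc : ∀ x h : EuclideanSpace ℝ (Fin n),
      f (x + h) ≤ f x + ⟪g x, h⟫ + (1 / 2) * ∑ i, v i * (h i) ^ 2)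
    (hψconv : ConvexOn ℝ Set.univ ψ)
    (hF : ∀ x, F x = f x + ψ x)
    (xstar : EuclideanSpace ℝ (Fin n))
    (x y z : ℕ → EuclideanSpace ℝ (Fin n)) (θ : ℕ → ℝ)
    (hθinit : θ 0 = 1) (hzinit : z 0 = x 0)
    (hy : ∀ k, y k = (1 - θ k) • x k + θ k • z k)
    (hxmin : ∀ k, ∀ u : EuclideanSpace ℝ (Fin n),
      ⟪g (y k), x (k + 1) - y k⟫ + (1 / 2) * (∑ i, v i * ((x (k + 1) - y k) i) ^ 2)
          + ψ (x (k + 1))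
        ≤ ⟪g (y k), u - y k⟫ + (1 / 2) * (∑ i, v i * ((u - y k) i) ^ 2) + ψ u)
    (hz : ∀ k, z (k + 1) = z k + (θ k)⁻¹ • (x (k + 1) - y k))
    (hθrec : ∀ k : ℕ, θ (k + 1) = (Real.sqrt ((θ k) ^ 4 + 4 * (θ k) ^ 2) - (θ k) ^ 2) / 2)
    (μ : ℝ) (hμ : 0 < μ)
    (hsc : ∀ u : EuclideanSpace ℝ (Fin n),
      F xstar + (μ / 2) * ∑ i, v i * ((u - xstar) i) ^ 2 ≤ F u) :
    ∀ k : ℕ, 1 ≤ k →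
      F (x k) - F xstar ≤ (θ (k - 1)) ^ 2 * (1 / μ) * (F (x 0) - F xstar) := by
  obtain rfl : F = f + ψ := funext hF
  set Q := EuclideanSpace.weightedSumSquares v
  simp only [← EuclideanSpace.weightedSumSquares_apply, one_div_mul_eq_div] at hdesc hxmin hsc
  have hθ_pos (k : ℕ) : 0 < θ k := by
    induction k with
    | zero => simp [hθinit]
    | succ k ih => exact (hθrec k).symm ▸ fistaMomentum_pos ih
  have hθ_le : ∀ k, θ k ≤ 1
    | 0 => hθinit.le
    | k + 1 => (hθrec k).symm ▸ (fistaMomentum_lt_one (hθ_pos k)).le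
  have hstep (k : ℕ) := fista_suboptimality_step Q (xstar := xstar) hfconv hψconv (hgrad (y k))
    (by simpa using hdesc (y k) (x (k + 1) - y k)) (hxmin k) (hθ_pos k) (hθ_le k) (hy k) (hz k)
  have hpot := fista_potential_le (a := fun k => (f + ψ) (x k) - (f + ψ) xstar)
    (d := fun k => Q (xstar - z k)) hθinit (fun k => hθ_le _)
    (fun k => (hθrec k).symm ▸ fistaMomentum_sq (θ k)) hstep
  have hinit : μ / 2 * Q (xstar - z 0) ≤ (f + ψ) (x 0) - (f + ψ) xstar := by
    have := hsc (x 0)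
    rw [hzinit, Q.map_sub]
    linarith
  rintro (_ | k) hk
  · omega
  have hdist := EuclideanSpace.weightedSumSquares_nonneg (fun i => (hv i).le) (xstar - z (k + 1))
  calc (f + ψ) (x (k + 1)) - (f + ψ) xstar
      ≤ θ k ^ 2 / 2 * Q (xstar - z 0) := by
        nlinarith [hpot k, sq_nonneg (θ k)]
    _ = θ k ^ 2 * (1 / μ) * (μ / 2 * Q (xstar - z 0)) := by field_simp
    _ ≤ θ k ^ 2 * (1 / μ) * ((f + ψ) (x 0) - (f + ψ) xstar) := by gcongr

theorem stmt_6 {n : ℕ} (hn : 1 ≤ n)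
    (v : Fin n → ℝ) (hv : ∀ i, 0 < v i)
    (f ψ F : EuclideanSpace ℝ (Fin n) → ℝ)
    (g : EuclideanSpace ℝ (Fin n) → EuclideanSpace ℝ (Fin n))
    (hfconv : ConvexOn ℝ Set.univ f)
    (hgrad : ∀ x, HasGradientAt f (g x) x)
    (hdesc : ∀ x h : EuclideanSpace ℝ (Fin n),
      f (x + h) ≤ f x + ⟪g x, h⟫ + (1 / 2) * ∑ i, v i * (h i) ^ 2)
    (hψconv : ConvexOn ℝ Set.univ ψ)
    (hF : ∀ x, F x = f x + ψ x)
    (xstar : EuclideanSpace ℝ (Fin n)) (hxstar : ∀ x, F xstar ≤ F x)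
    (x y z : ℕ → EuclideanSpace ℝ (Fin n)) (θ : ℕ → ℝ)
    (hθinit : θ 0 = 1) (hzinit : z 0 = x 0)
    (hy : ∀ k, y k = (1 - θ k) • x k + θ k • z k)
    (hxmin : ∀ k, ∀ u : EuclideanSpace ℝ (Fin n),
      ⟪g (y k), x (k + 1) - y k⟫ + (1 / 2) * (∑ i, v i * ((x (k + 1) - y k) i) ^ 2)
          + ψ (x (k + 1))
        ≤ ⟪g (y k), u - y k⟫ + (1 / 2) * (∑ i, v i * ((u - y k) i) ^ 2) + ψ u)
    (hz : ∀ k, z (k + 1) = z k + (θ k)⁻¹ • (x (k + 1) - y k))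
    (hθrec : ∀ k : ℕ, θ (k + 1) = (Real.sqrt ((θ k) ^ 4 + 4 * (θ k) ^ 2) - (θ k) ^ 2) / 2)
    (μ : ℝ) (hμ : 0 < μ)
    (hsc : ∀ u : EuclideanSpace ℝ (Fin n),
      F xstar + (μ / 2) * ∑ i, v i * ((u - xstar) i) ^ 2 ≤ F u) :
    ∀ k : ℕ, 1 ≤ k →
      F (x k) - F xstar ≤ (θ (k - 1)) ^ 2 * (1 / μ) * (F (x 0) - F xstar) :=
  stmt_6_general v hv f ψ F g hfconv hgrad hdesc hψconv hF xstar x y z θ hθinit hzinit hy hxmin hz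
    hθrec μ hμ hsc
end

section
/- For the FISTA iterates, let k ≥ 1, let σ ∈ [0,1], and set x̄_k = (1−σ)·x_k + σ·z_k. Then (1/2)·‖x̄_k − x_*‖_v² ≤ (1/2)·max(σ, 1 − σ·μ/θ_{k−1}²)·‖x_0 − x_*‖_v². -/
/-!
The proximal-gradient step satisfies the three-point inequality
`F x⁺ + ½‖u - x⁺‖² ≤ F u + ½‖u - y‖²` (descent lemma, tangent inequality for `f`, and strong
convexity of the proximal objective). Taking `u = (1 - θₖ) xₖ + θₖ x⋆` gives a one-step
decrease of `F xₖ - F x⋆ + θₖ²/2 ‖zₖ - x⋆‖²`, and the momentum identity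
`θₖ₊₁² = θₖ² (1 - θₖ₊₁)` telescopes it into
`F xₖ₊₁ - F x⋆ ≤ θₖ²/2 (‖x₀ - x⋆‖² - ‖zₖ₊₁ - x⋆‖²)`.
Hence every `zₖ`, and every `xₖ` (no farther from `x⋆` than `yₖ`, a convex combination of
`xₖ` and `zₖ`), stays within `‖x₀ - x⋆‖` of `x⋆`; quadratic growth turns the gap bound into
`‖zₖ₊₁ - x⋆‖² ≤ ‖x₀ - x⋆‖² - μ/θₖ² ‖xₖ₊₁ - x⋆‖²`, and convexity of the square norm along the
segment `[xₖ₊₁, zₖ₊₁]` finishes.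
-/


open scoped RealInnerProductSpace
open Set Filter Topology

section WeightedSqNorm

variable {ι : Type*} [Fintype ι] (v : ι → ℝ)

def weightedSqNorm (a : EuclideanSpace ℝ ι) : ℝ := ∑ i, v i * a i ^ 2

theorem weightedSqNorm_nonneg {v : ι → ℝ} (hv : ∀ i, 0 ≤ v i) (a : EuclideanSpace ℝ ι) :
    0 ≤ weightedSqNorm v a :=
  Finset.sum_nonneg fun i _ => mul_nonneg (hv i) (sq_nonneg _)

theorem weightedSqNorm_smul (c : ℝ) (a : EuclideanSpace ℝ ι) :
    weightedSqNorm v (c • a) = c ^ 2 * weightedSqNorm v a := by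
  simp only [weightedSqNorm, Finset.mul_sum, PiLp.smul_apply, smul_eq_mul]
  exact Finset.sum_congr rfl fun i _ => by ring

theorem weightedSqNorm_sub_comm (a b : EuclideanSpace ℝ ι) :
    weightedSqNorm v (a - b) = weightedSqNorm v (b - a) := by
  rw [← neg_sub, ← neg_one_smul ℝ (b - a), weightedSqNorm_smul, neg_one_sq, one_mul]

theorem weightedSqNorm_convexComb (t : ℝ) (a b : EuclideanSpace ℝ ι) :
    weightedSqNorm v ((1 - t) • a + t • b)
      = (1 - t) * weightedSqNorm v a + t * weightedSqNorm v b
        - t * (1 - t) * weightedSqNorm v (b - a) := by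
  simp only [weightedSqNorm, Finset.mul_sum, ← Finset.sum_add_distrib, ← Finset.sum_sub_distrib,
    PiLp.add_apply, PiLp.sub_apply, PiLp.smul_apply, smul_eq_mul]
  exact Finset.sum_congr rfl fun i _ => by ring

theorem weightedSqNorm_convexComb_le {v : ι → ℝ} (hv : ∀ i, 0 ≤ v i) {t : ℝ} (ht₀ : 0 ≤ t)
    (ht₁ : t ≤ 1) (a b : EuclideanSpace ℝ ι) :
    weightedSqNorm v ((1 - t) • a + t • b)
      ≤ (1 - t) * weightedSqNorm v a + t * weightedSqNorm v b := by
  rw [weightedSqNorm_convexComb]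
  have := mul_nonneg (mul_nonneg ht₀ (sub_nonneg.2 ht₁)) (weightedSqNorm_nonneg hv (b - a))
  linarith

end WeightedSqNorm

theorem ConvexOn.add_inner_le_of_hasGradientAt {E : Type*} [NormedAddCommGroup E]
    [InnerProductSpace ℝ E] [CompleteSpace E] {f : E → ℝ} {x g : E}
    (hf : ConvexOn ℝ univ f) (hg : HasGradientAt f g x) (u : E) :
    f x + ⟪g, u - x⟫ ≤ f u := by
  set ℓ : ℝ →ᵃ[ℝ] E := AffineMap.lineMap x u
  have hline : ConvexOn ℝ univ (f ∘ ℓ) := hf.comp_affineMap ℓ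
  have hderiv : HasDerivAt (f ∘ ℓ) ⟪g, u - x⟫ 0 := by
    have hfx : HasFDerivAt f (InnerProductSpace.toDual ℝ E g) (ℓ 0) := by
      rw [AffineMap.lineMap_apply_zero]; exact hg.hasFDerivAt
    simpa using hfx.comp_hasDerivAt (0 : ℝ) AffineMap.hasDerivAt_lineMap
  have := hline.le_slope_of_hasDerivAt (mem_univ 0) (mem_univ 1) zero_lt_one hderiv
  simp only [ℓ, slope_def_field, Function.comp_apply, AffineMap.lineMap_apply_zero,
    AffineMap.lineMap_apply_one, sub_zero, div_one] at this
  linarith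

/-- Mathlib's `StrongConvexOn` measures the modulus with the ambient norm; here it is an arbitrary
`q`, such as a weighted square norm. -/
def StronglyConvexWrt {E : Type*} [AddCommGroup E] [Module ℝ E] (q h : E → ℝ) : Prop :=
  ∀ (a b : E) (t : ℝ), 0 ≤ t → t ≤ 1 →
    h ((1 - t) • a + t • b) ≤ (1 - t) * h a + t * h b - t * (1 - t) / 2 * q (b - a)

theorem StronglyConvexWrt.add_half_le_of_forall_le {E : Type*} [AddCommGroup E] [Module ℝ E]
    {q h : E → ℝ} (hh : StronglyConvexWrt q h) {m : E} (hmin : ∀ w, h m ≤ h w) (u : E) :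
    h m + q (u - m) / 2 ≤ h u := by
  have hsmall : ∀ t ∈ Ioo (0 : ℝ) 1, h m + (1 - t) * q (u - m) / 2 ≤ h u := by
    rintro t ⟨ht₀, ht₁⟩
    have := (hmin _).trans (hh m u t ht₀.le ht₁.le)
    nlinarith
  have hlim : Tendsto (fun t : ℝ => h m + (1 - t) * q (u - m) / 2) (𝓝[>] 0)
      (𝓝 (h m + (1 - 0) * q (u - m) / 2)) :=
    ((Continuous.tendsto (by fun_prop) 0).mono_left nhdsWithin_le_nhds)
  simpa using le_of_tendsto hlim (eventually_of_mem (Ioo_mem_nhdsGT one_pos) hsmall)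

section ProximalGradient

variable {ι : Type*} [Fintype ι] {v : ι → ℝ}

theorem stronglyConvexWrt_proxObjective {ψ : EuclideanSpace ℝ ι → ℝ} (hψ : ConvexOn ℝ univ ψ)
    (G y : EuclideanSpace ℝ ι) :
    StronglyConvexWrt (weightedSqNorm v)
      (fun u => ⟪G, u - y⟫ + 1 / 2 * weightedSqNorm v (u - y) + ψ u) := by
  intro a b t ht₀ ht₁
  have hcomb : (1 - t) • a + t • b - y = (1 - t) • (a - y) + t • (b - y) := by module
  have hinner : ⟪G, (1 - t) • a + t • b - y⟫ = (1 - t) * ⟪G, a - y⟫ + t * ⟪G, b - y⟫ := by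
    rw [hcomb, inner_add_right, real_inner_smul_right, real_inner_smul_right]
  have hquad := weightedSqNorm_convexComb v t (a - y) (b - y)
  rw [← hcomb, sub_sub_sub_cancel_right] at hquad
  have hψab := hψ.2 (mem_univ a) (mem_univ b) (sub_nonneg.2 ht₁) ht₀ (sub_add_cancel 1 t)
  simp only [smul_eq_mul] at hψab
  simp only [hinner, hquad]
  linarith

theorem proxGradStep_le {f ψ : EuclideanSpace ℝ ι → ℝ} {G y x' : EuclideanSpace ℝ ι}
    (hf : ConvexOn ℝ univ f) (hG : HasGradientAt f G y)
    (hdesc : f x' ≤ f y + ⟪G, x' - y⟫ + 1 / 2 * weightedSqNorm v (x' - y))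
    (hψ : ConvexOn ℝ univ ψ)
    (hmin : ∀ u, ⟪G, x' - y⟫ + 1 / 2 * weightedSqNorm v (x' - y) + ψ x'
      ≤ ⟪G, u - y⟫ + 1 / 2 * weightedSqNorm v (u - y) + ψ u)
    (u : EuclideanSpace ℝ ι) :
    f x' + ψ x' + weightedSqNorm v (u - x') / 2
      ≤ f u + ψ u + weightedSqNorm v (u - y) / 2 := by
  have hthree := (stronglyConvexWrt_proxObjective hψ G y).add_half_le_of_forall_le hmin u
  have htangent := hf.add_inner_le_of_hasGradientAt hG u
  linarith

theorem fistaStep_le {F : EuclideanSpace ℝ ι → ℝ} (hF : ConvexOn ℝ univ F) {θ : ℝ}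
    (hθ₀ : 0 < θ) (hθ₁ : θ ≤ 1) {x y z x' z' xstar : EuclideanSpace ℝ ι}
    (hy : y = (1 - θ) • x + θ • z) (hz : z' = z + θ⁻¹ • (x' - y))
    (hprox : ∀ u, F x' + weightedSqNorm v (u - x') / 2 ≤ F u + weightedSqNorm v (u - y) / 2) :
    F x' - F xstar + θ ^ 2 / 2 * weightedSqNorm v (z' - xstar)
      ≤ (1 - θ) * (F x - F xstar) + θ ^ 2 / 2 * weightedSqNorm v (z - xstar) := by
  have hx' : x' = y + θ • (z' - z) := by
    rw [hz, add_sub_cancel_left, smul_inv_smul₀ hθ₀.ne', add_sub_cancel]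
  subst hx' hy
  set u := (1 - θ) • x + θ • xstar
  have hFu : F u ≤ (1 - θ) * F x + θ * F xstar := by
    simpa only [smul_eq_mul] using
      hF.2 (mem_univ x) (mem_univ xstar) (sub_nonneg.2 hθ₁) hθ₀.le (sub_add_cancel 1 θ)
  have hu_y : u - ((1 - θ) • x + θ • z) = θ • (xstar - z) := by module
  have hu_x' : u - ((1 - θ) • x + θ • z + θ • (z' - z)) = θ • (xstar - z') := by module
  have := hprox u
  rw [hu_y, hu_x', weightedSqNorm_smul, weightedSqNorm_smul, weightedSqNorm_sub_comm v xstar,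
    weightedSqNorm_sub_comm v xstar] at this
  nlinarith

end ProximalGradient

theorem fistaMomentum_sq_s9 {t s : ℝ} (hs : s = (√(t ^ 4 + 4 * t ^ 2) - t ^ 2) / 2) :
    s ^ 2 = t ^ 2 * (1 - s) := by
  have hr := Real.sq_sqrt (by positivity : (0 : ℝ) ≤ t ^ 4 + 4 * t ^ 2)
  subst hs
  linear_combination hr / 4

theorem fistaMomentum_pos_s9 {t s : ℝ} (ht : t ≠ 0) (hs : s = (√(t ^ 4 + 4 * t ^ 2) - t ^ 2) / 2) :
    0 < s := by
  have hlt : t ^ 2 < √(t ^ 4 + 4 * t ^ 2) := by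
    rw [Real.lt_sqrt (by positivity)]
    nlinarith [pow_pos (sq_pos_of_ne_zero ht) 1]
  rw [hs]
  linarith

theorem fistaMomentum_le_one {t s : ℝ} (hs : s = (√(t ^ 4 + 4 * t ^ 2) - t ^ 2) / 2) :
    s ≤ 1 := by
  have hle : √(t ^ 4 + 4 * t ^ 2) ≤ t ^ 2 + 2 := by
    rw [Real.sqrt_le_left (by positivity)]
    nlinarith
  rw [hs]
  linarith

theorem gap_le_of_fistaStep {a b θ : ℕ → ℝ} (hθ₀ : θ 0 = 1) (hθ₁ : ∀ k, θ k ≤ 1)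
    (hθsq : ∀ k, θ (k + 1) ^ 2 = θ k ^ 2 * (1 - θ (k + 1)))
    (hstep : ∀ k, a (k + 1) + θ k ^ 2 / 2 * b (k + 1) ≤ (1 - θ k) * a k + θ k ^ 2 / 2 * b k)
    (k : ℕ) : a (k + 1) ≤ θ k ^ 2 / 2 * (b 0 - b (k + 1)) := by
  induction k with
  | zero =>
    have := hstep 0
    rw [hθ₀] at this ⊢
    linarith
  | succ k ih =>
    have hdecay := mul_le_mul_of_nonneg_left ih (sub_nonneg.2 (hθ₁ (k + 1)))
    have hrescale : (1 - θ (k + 1)) * (θ k ^ 2 / 2 * (b 0 - b (k + 1)))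
        = θ (k + 1) ^ 2 / 2 * (b 0 - b (k + 1)) := by
      rw [hθsq k]; ring
    linarith [hstep (k + 1)]

theorem le_initial_of_le_convexComb {c b θ : ℕ → ℝ} (hθ₀ : ∀ k, 0 ≤ θ k) (hθ₁ : ∀ k, θ k ≤ 1)
    (hb : ∀ k, b k ≤ c 0) (hc : ∀ k, c (k + 1) ≤ (1 - θ k) * c k + θ k * b k) (k : ℕ) :
    c k ≤ c 0 := by
  induction k with
  | zero => rfl
  | succ k ih =>
    have := mul_le_mul_of_nonneg_left ih (sub_nonneg.2 (hθ₁ k))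
    have := mul_le_mul_of_nonneg_left (hb k) (hθ₀ k)
    linarith [hc k]

theorem convexComb_le_max_mul {σ κ b c N : ℝ} (hσ : 0 ≤ σ) (hc₀ : 0 ≤ c)
    (hc : c ≤ N) (hb : b ≤ N - κ * c) :
    (1 - σ) * c + σ * b ≤ max σ (1 - σ * κ) * N := by
  have hN : 0 ≤ N := hc₀.trans hc
  have hlin : (1 - σ) * c + σ * b ≤ σ * N + (1 - σ - σ * κ) * c := by
    nlinarith [mul_le_mul_of_nonneg_left hb hσ]
  rcases le_total (1 - σ - σ * κ) 0 with hneg | hpos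
  · have := mul_nonpos_of_nonpos_of_nonneg hneg hc₀
    have := mul_le_mul_of_nonneg_right (le_max_left σ (1 - σ * κ)) hN
    linarith
  · have := mul_le_mul_of_nonneg_left hc hpos
    have := mul_le_mul_of_nonneg_right (le_max_right σ (1 - σ * κ)) hN
    linarith

section FistaRun

variable {ι : Type*} [Fintype ι]

/-- The proximal step enters the analysis only through the three-point inequality `prox`. -/
structure IsFistaRun (v : ι → ℝ) (F : EuclideanSpace ℝ ι → ℝ) (x y z : ℕ → EuclideanSpace ℝ ι)
    (θ : ℕ → ℝ) : Prop where
  theta_zero : θ 0 = 1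
  theta_pos : ∀ k, 0 < θ k
  theta_le_one : ∀ k, θ k ≤ 1
  theta_sq_succ : ∀ k, θ (k + 1) ^ 2 = θ k ^ 2 * (1 - θ (k + 1))
  z_zero : z 0 = x 0
  y_eq : ∀ k, y k = (1 - θ k) • x k + θ k • z k
  z_succ : ∀ k, z (k + 1) = z k + (θ k)⁻¹ • (x (k + 1) - y k)
  prox : ∀ k u, F (x (k + 1)) + weightedSqNorm v (u - x (k + 1)) / 2
    ≤ F u + weightedSqNorm v (u - y k) / 2

namespace IsFistaRun

variable {v : ι → ℝ} {F : EuclideanSpace ℝ ι → ℝ} {x y z : ℕ → EuclideanSpace ℝ ι} {θ : ℕ → ℝ}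
  {xstar : EuclideanSpace ℝ ι}

theorem gap_le (hrun : IsFistaRun v F x y z θ) (hF : ConvexOn ℝ univ F) (k : ℕ) :
    F (x (k + 1)) - F xstar
      ≤ θ k ^ 2 / 2 * (weightedSqNorm v (x 0 - xstar) - weightedSqNorm v (z (k + 1) - xstar)) := by
  rw [← hrun.z_zero]
  exact gap_le_of_fistaStep (a := fun k => F (x k) - F xstar)
    (b := fun k => weightedSqNorm v (z k - xstar)) hrun.theta_zero hrun.theta_le_one
    hrun.theta_sq_succ (fun k => fistaStep_le hF (hrun.theta_pos k) (hrun.theta_le_one k)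
      (hrun.y_eq k) (hrun.z_succ k) (hrun.prox k)) k

theorem dist_z_le (hrun : IsFistaRun v F x y z θ) (hF : ConvexOn ℝ univ F)
    (hxstar : ∀ u, F xstar ≤ F u) (k : ℕ) :
    weightedSqNorm v (z k - xstar) ≤ weightedSqNorm v (x 0 - xstar) := by
  cases k with
  | zero => rw [hrun.z_zero]
  | succ k =>
    have hgap := hrun.gap_le hF (xstar := xstar) k
    have hθsq := pow_pos (hrun.theta_pos k) 2
    nlinarith [hxstar (x (k + 1))]

theorem dist_x_le (hrun : IsFistaRun v F x y z θ) (hv : ∀ i, 0 ≤ v i) (hF : ConvexOn ℝ univ F)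
    (hxstar : ∀ u, F xstar ≤ F u) (k : ℕ) :
    weightedSqNorm v (x k - xstar) ≤ weightedSqNorm v (x 0 - xstar) := by
  refine le_initial_of_le_convexComb (c := fun k => weightedSqNorm v (x k - xstar))
    (fun k => (hrun.theta_pos k).le) hrun.theta_le_one (hrun.dist_z_le hF hxstar) (fun k => ?_) k
  have hy : y k - xstar = (1 - θ k) • (x k - xstar) + θ k • (z k - xstar) := by
    rw [hrun.y_eq k]; module
  have hcontract : weightedSqNorm v (x (k + 1) - xstar) ≤ weightedSqNorm v (y k - xstar) := by
    have := hrun.prox k xstar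
    rw [weightedSqNorm_sub_comm v xstar, weightedSqNorm_sub_comm v xstar] at this
    linarith [hxstar (x (k + 1))]
  rw [hy] at hcontract
  exact hcontract.trans
    (weightedSqNorm_convexComb_le hv (hrun.theta_pos k).le (hrun.theta_le_one k) _ _)

end IsFistaRun

end FistaRun

theorem stmt_9_general {n : ℕ}
    (v : Fin n → ℝ) (hv : ∀ i, 0 < v i)
    (f ψ F : EuclideanSpace ℝ (Fin n) → ℝ)
    (g : EuclideanSpace ℝ (Fin n) → EuclideanSpace ℝ (Fin n))
    (hfconv : ConvexOn ℝ Set.univ f)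
    (hgrad : ∀ x, HasGradientAt f (g x) x)
    (hdesc : ∀ x h : EuclideanSpace ℝ (Fin n),
      f (x + h) ≤ f x + ⟪g x, h⟫ + (1 / 2) * ∑ i, v i * (h i) ^ 2)
    (hψconv : ConvexOn ℝ Set.univ ψ)
    (hF : ∀ x, F x = f x + ψ x)
    (xstar : EuclideanSpace ℝ (Fin n)) (hxstar : ∀ x, F xstar ≤ F x)
    (x y z : ℕ → EuclideanSpace ℝ (Fin n)) (θ : ℕ → ℝ)
    (hθinit : θ 0 = 1) (hzinit : z 0 = x 0)
    (hy : ∀ k, y k = (1 - θ k) • x k + θ k • z k)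
    (hxmin : ∀ k, ∀ u : EuclideanSpace ℝ (Fin n),
      ⟪g (y k), x (k + 1) - y k⟫ + (1 / 2) * (∑ i, v i * ((x (k + 1) - y k) i) ^ 2)
          + ψ (x (k + 1))
        ≤ ⟪g (y k), u - y k⟫ + (1 / 2) * (∑ i, v i * ((u - y k) i) ^ 2) + ψ u)
    (hz : ∀ k, z (k + 1) = z k + (θ k)⁻¹ • (x (k + 1) - y k))
    (hθrec : ∀ k : ℕ, θ (k + 1) = (Real.sqrt ((θ k) ^ 4 + 4 * (θ k) ^ 2) - (θ k) ^ 2) / 2)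
    (μ : ℝ)
    (hsc : ∀ u : EuclideanSpace ℝ (Fin n),
      F xstar + (μ / 2) * ∑ i, v i * ((u - xstar) i) ^ 2 ≤ F u)
    (σ : ℝ) (hσ0 : 0 ≤ σ) (hσ1 : σ ≤ 1) :
    ∀ k : ℕ, 1 ≤ k →
      (1 / 2) * ∑ i, v i * (((1 - σ) • x k + σ • z k - xstar) i) ^ 2
        ≤ (1 / 2) * max σ (1 - σ * μ / (θ (k - 1)) ^ 2)
            * ∑ i, v i * ((x 0 - xstar) i) ^ 2 := by
  have hv₀ : ∀ i, 0 ≤ v i := fun i => (hv i).le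
  have hθ : ∀ k, 0 < θ k ∧ θ k ≤ 1 := by
    intro k
    induction k with
    | zero => rw [hθinit]; exact ⟨one_pos, le_rfl⟩
    | succ k ih => exact ⟨fistaMomentum_pos_s9 ih.1.ne' (hθrec k), fistaMomentum_le_one (hθrec k)⟩
  have hFconv : ConvexOn ℝ univ F := (funext hF : F = f + ψ) ▸ hfconv.add hψconv
  have hrun : IsFistaRun v F x y z θ :=
    { theta_zero := hθinit
      theta_pos := fun k => (hθ k).1
      theta_le_one := fun k => (hθ k).2
      theta_sq_succ := fun k => fistaMomentum_sq_s9 (hθrec k)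
      z_zero := hzinit
      y_eq := hy
      z_succ := hz
      prox := fun k u => by
        have hdesc' := hdesc (y k) (x (k + 1) - y k)
        rw [add_sub_cancel] at hdesc'
        simpa only [hF] using proxGradStep_le hfconv (hgrad (y k)) hdesc' hψconv (hxmin k) u }
  intro k hk
  obtain ⟨k, rfl⟩ := Nat.exists_eq_add_of_le' hk
  have hgap := hrun.gap_le hFconv (xstar := xstar) k
  have hbz : weightedSqNorm v (z (k + 1) - xstar)
      ≤ weightedSqNorm v (x 0 - xstar) - μ / θ k ^ 2 * weightedSqNorm v (x (k + 1) - xstar) := by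
    have hθsq := pow_pos (hrun.theta_pos k) 2
    have hgrowth : F xstar + μ / 2 * weightedSqNorm v (x (k + 1) - xstar) ≤ F (x (k + 1)) :=
      hsc _
    rw [div_mul_eq_mul_div, le_sub_comm, div_le_iff₀ hθsq]
    linarith
  have hbound := convexComb_le_max_mul hσ0 (weightedSqNorm_nonneg hv₀ _)
    (hrun.dist_x_le hv₀ hFconv hxstar (k + 1)) hbz
  have hcomb : (1 - σ) • x (k + 1) + σ • z (k + 1) - xstar
      = (1 - σ) • (x (k + 1) - xstar) + σ • (z (k + 1) - xstar) := by module
  change 1 / 2 * weightedSqNorm v _ ≤ 1 / 2 * _ * weightedSqNorm v _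
  rw [hcomb, Nat.add_sub_cancel, mul_div_assoc, mul_assoc]
  gcongr
  exact (weightedSqNorm_convexComb_le hv₀ hσ0 hσ1 _ _).trans hbound

theorem stmt_9 {n : ℕ} (hn : 1 ≤ n)
    (v : Fin n → ℝ) (hv : ∀ i, 0 < v i)
    (f ψ F : EuclideanSpace ℝ (Fin n) → ℝ)
    (g : EuclideanSpace ℝ (Fin n) → EuclideanSpace ℝ (Fin n))
    (hfconv : ConvexOn ℝ Set.univ f)
    (hgrad : ∀ x, HasGradientAt f (g x) x)
    (hdesc : ∀ x h : EuclideanSpace ℝ (Fin n),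
      f (x + h) ≤ f x + ⟪g x, h⟫ + (1 / 2) * ∑ i, v i * (h i) ^ 2)
    (hψconv : ConvexOn ℝ Set.univ ψ)
    (hF : ∀ x, F x = f x + ψ x)
    (xstar : EuclideanSpace ℝ (Fin n)) (hxstar : ∀ x, F xstar ≤ F x)
    (x y z : ℕ → EuclideanSpace ℝ (Fin n)) (θ : ℕ → ℝ)
    (hθinit : θ 0 = 1) (hzinit : z 0 = x 0)
    (hy : ∀ k, y k = (1 - θ k) • x k + θ k • z k)
    (hxmin : ∀ k, ∀ u : EuclideanSpace ℝ (Fin n),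
      ⟪g (y k), x (k + 1) - y k⟫ + (1 / 2) * (∑ i, v i * ((x (k + 1) - y k) i) ^ 2)
          + ψ (x (k + 1))
        ≤ ⟪g (y k), u - y k⟫ + (1 / 2) * (∑ i, v i * ((u - y k) i) ^ 2) + ψ u)
    (hz : ∀ k, z (k + 1) = z k + (θ k)⁻¹ • (x (k + 1) - y k))
    (hθrec : ∀ k : ℕ, θ (k + 1) = (Real.sqrt ((θ k) ^ 4 + 4 * (θ k) ^ 2) - (θ k) ^ 2) / 2)
    (μ : ℝ) (hμ : 0 < μ)
    (hsc : ∀ u : EuclideanSpace ℝ (Fin n),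
      F xstar + (μ / 2) * ∑ i, v i * ((u - xstar) i) ^ 2 ≤ F u)
    (σ : ℝ) (hσ0 : 0 ≤ σ) (hσ1 : σ ≤ 1) :
    ∀ k : ℕ, 1 ≤ k →
      (1 / 2) * ∑ i, v i * (((1 - σ) • x k + σ • z k - xstar) i) ^ 2
        ≤ (1 / 2) * max σ (1 - σ * μ / (θ (k - 1)) ^ 2)
            * ∑ i, v i * ((x 0 - xstar) i) ^ 2 :=
  stmt_9_general v hv f ψ F g hfconv hgrad hdesc hψconv hF xstar hxstar x y z θ hθinit hzinit hy
    hxmin hz hθrec μ hsc σ hσ0 hσ1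
end
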